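/- For any unitary matrix U on ℂ^d, the discrete Wigner propagator is real-valued: for all (m',n'), (m,n) ∈ ZMod d × ZMod d, G_W((m',n'),(m,n)) equals its own complex conjugate. -/
import Mathlib


open Matrix Complex

noncomputable section

/-- `ω = exp(2πi/d)`, a primitive `d`-th root of unity. -/
def omega (d : ℕ) : ℂ := Complex.exp (2 * Real.pi * Complex.I / d)

/-- Powers of `ω` with exponent valued in `ZMod d`, evaluated via the canonical
integer representative (well-defined since `ω ^ d = 1`). -/
def wpow (d : ℕ) (x : ZMod d) : ℂ := omega d ^ x.val

/-- The clock matrix `Z`, acting as `Z e_n = ω^n e_n`. -/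
def clockZ (d : ℕ) : Matrix (ZMod d) (ZMod d) ℂ :=
  Matrix.diagonal (fun n => wpow d n)

/-- The shift matrix `X`, acting as `X e_n = e_{n+1}`. -/
def shiftX (d : ℕ) : Matrix (ZMod d) (ZMod d) ℂ :=
  Matrix.of (fun i j => if i = j + 1 then 1 else 0)

/-- The displacement operator `D(k,j) = ω^{-2⁻¹ k j} Z^k X^j`. -/
def Dop (d : ℕ) [NeZero d] (k j : ZMod d) : Matrix (ZMod d) (ZMod d) ℂ :=
  wpow d (-(2⁻¹ * k * j)) • (clockZ d ^ k.val * shiftX d ^ j.val)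

/-- The Weyl symbol of a matrix `A`: `Ã(k,j) = Tr(A · D(k,j))`. -/
def weylSymbol (d : ℕ) [NeZero d] (A : Matrix (ZMod d) (ZMod d) ℂ) (k j : ZMod d) : ℂ :=
  Matrix.trace (A * Dop d k j)

/-- The phase-space symbol of `B`:
`B_W(m,n) = (1/d) Σ_{k,j} Tr(B·D(k,j)) ω^{jn−km}`. -/
def psSymbol (d : ℕ) [NeZero d] (B : Matrix (ZMod d) (ZMod d) ℂ) (m n : ZMod d) : ℂ :=
  (1 / (d : ℂ)) * ∑ k : ZMod d, ∑ j : ZMod d,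
    weylSymbol d B k j * wpow d (j * n - k * m)

/-- The discrete Wigner propagator of a unitary `U`:
`G_W((m',n'),(m,n)) = (1/d²) Σ_{m̃,ñ} ω^{−2[m̃(n'−n) − ñ(m'−m)]}
  U_W(m+m̃, n+ñ) · conj(U_W(m'−m̃, n'−ñ))`. -/
def propG (d : ℕ) [NeZero d] (U : Matrix (ZMod d) (ZMod d) ℂ)
    (μ' μ : ZMod d × ZMod d) : ℂ :=
  (1 / (d : ℂ) ^ 2) * ∑ mt : ZMod d, ∑ nt : ZMod d,
    wpow d (-(2 * (mt * (μ'.2 - μ.2) - nt * (μ'.1 - μ.1)))) *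
      psSymbol d U (μ.1 + mt) (μ.2 + nt) *
      (starRingEnd ℂ) (psSymbol d U (μ'.1 - mt) (μ'.2 - nt))

lemma omega_pow_d (d : ℕ) [NeZero d] : omega d ^ d = 1 := by
  have hd : (d:ℂ) ≠ 0 := Nat.cast_ne_zero.mpr (NeZero.ne d)
  rw [omega, ← Complex.exp_nat_mul]
  have : (d:ℂ) * (2 * Real.pi * Complex.I / d) = 2 * Real.pi * Complex.I := by
    field_simp
  rw [this, Complex.exp_two_pi_mul_I]

lemma wpow_add (d : ℕ) [NeZero d] (a b : ZMod d) :
    wpow d a * wpow d b = wpow d (a + b) := by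
  unfold wpow
  rw [← pow_add]
  have h := ZMod.val_add a b
  have hdiv := Nat.mod_add_div (a.val + b.val) d
  calc omega d ^ (a.val + b.val)
      = omega d ^ ((a.val + b.val) % d + d * ((a.val + b.val) / d)) := by rw [hdiv]
    _ = omega d ^ ((a.val + b.val) % d) * (omega d ^ d) ^ ((a.val + b.val) / d) := by
        rw [pow_add, pow_mul]
    _ = omega d ^ ((a+b).val) := by rw [omega_pow_d, one_pow, mul_one, h]

lemma conj_wpow (d : ℕ) [NeZero d] (x : ZMod d) :
    (starRingEnd ℂ) (wpow d x) = wpow d (-x) := by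
  have hconj : (starRingEnd ℂ) (omega d) = (omega d)⁻¹ := by
    rw [omega, ← Complex.exp_conj, ← Complex.exp_neg]
    congr 1
    have h2 : (2 * (Real.pi:ℂ) * Complex.I / d) = ((2*Real.pi/d : ℝ):ℂ) * Complex.I := by
      push_cast; ring
    rw [h2, _root_.map_mul, Complex.conj_ofReal, Complex.conj_I, mul_neg]
  have hmul : wpow d x * wpow d (-x) = 1 := by
    rw [wpow_add, add_neg_cancel]
    unfold wpow
    simp [ZMod.val_zero]
  rw [wpow, map_pow, hconj, inv_pow, ← wpow]
  exact inv_eq_of_mul_eq_one_left (by rw [mul_comm]; exact hmul)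

theorem propagator_real
    (d : ℕ) [NeZero d] (hd : Nat.Prime d) (hodd : Odd d)
    (U : Matrix (ZMod d) (ZMod d) ℂ) (hU : U ∈ Matrix.unitaryGroup (ZMod d) ℂ)
    (m' n' m n : ZMod d) :
    propG d U (m', n') (m, n) = (starRingEnd ℂ) (propG d U (m', n') (m, n)) := by
  have hc : (starRingEnd ℂ) (1 / (d:ℂ)^2) = 1/(d:ℂ)^2 := by
    rw [map_div₀, _root_.map_one, map_pow, Complex.conj_natCast]
  unfold propG
  dsimp only
  rw [_root_.map_mul, hc]
  congr 1
  rw [map_sum]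
  refine Fintype.sum_equiv (Equiv.subLeft (m' - m)) _ _ fun mt => ?_
  rw [map_sum]
  refine Fintype.sum_equiv (Equiv.subLeft (n' - n)) _ _ fun nt => ?_
  simp only [Equiv.subLeft_apply]
  rw [_root_.map_mul, _root_.map_mul, conj_wpow, Complex.conj_conj]
  have e1 : m + (m' - m - mt) = m' - mt := by ring
  have e2 : n + (n' - n - nt) = n' - nt := by ring
  have e3 : m' - (m' - m - mt) = m + mt := by ring
  have e4 : n' - (n' - n - nt) = n + nt := by ring
  have e5 : -(2 * ((m' - m - mt) * (n' - n) - (n' - n - nt) * (m' - m)))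
      = -(-(2 * (mt * (n' - n) - nt * (m' - m)))) := by ring
  rw [e1, e2, e3, e4, e5]
  ring
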